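/- Equality patterns preserve value equality: if δ₁ ⇌_Δ δ₂ are value environments with the same equality pattern under Δ, and v₁, v₂ are values (terms possibly containing variables of Δ) of a common type τ, then the denotations of v₁ and v₂ under δ₁ are equal if and only if their denotations under δ₂ are equal. -/

import Mathlib

/-- Polymorphic types: Unit, Sum, Prod, and type variables. -/
inductive PTy : Type
  | unit : PTy
  | sum : PTy → PTy → PTy
  | prod : PTy → PTy → PTy
  | var : ℕ → PTy
deriving DecidableEq

/-- Apply a type-variable substitution. -/
def psubst (σ : ℕ → PTy) : PTy → PTy
  | .unit => .unit
  | .sum a b => .sum (psubst σ a) (psubst σ b)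
  | .prod a b => .prod (psubst σ a) (psubst σ b)
  | .var n => σ n

/-- Concrete values. -/
inductive Val : Type
  | sole : Val
  | vleft : Val → Val
  | vright : Val → Val
  | vpair : Val → Val → Val
deriving DecidableEq

/-- Typing of concrete values. -/
inductive HasTy : Val → PTy → Prop
  | sole : HasTy .sole .unit
  | vleft {v a b} : HasTy v a → HasTy (.vleft v) (.sum a b)
  | vright {v a b} : HasTy v b → HasTy (.vright v) (.sum a b)
  | vpair {v w a b} : HasTy v a → HasTy w b → HasTy (.vpair v w) (.prod a b)

/-- A type is monomorphic (contains no type variables). -/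
def Mono : PTy → Prop
  | .unit => True
  | .sum a b => Mono a ∧ Mono b
  | .prod a b => Mono a ∧ Mono b
  | .var _ => False

/-- Shells: values with holes at type-variable positions. -/
inductive Shell : Type
  | sole : Shell
  | sleft : Shell → Shell
  | sright : Shell → Shell
  | spair : Shell → Shell → Shell
  | hole : ℕ → Shell
deriving DecidableEq

/-- The shell of a value at a (possibly polymorphic) type. -/
def shell : PTy → Val → Shell
  | .var n, _ => .hole n
  | .sum a _, .vleft v => .sleft (shell a v)
  | .sum _ b, .vright v => .sright (shell b v)
  | .prod a b, .vpair v w => .spair (shell a v) (shell b w)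
  | _, _ => .sole

/-- The ordered list of α-holes of a value at a type. -/
def holes (α : ℕ) : PTy → Val → List Val
  | .var n, v => if n = α then [v] else []
  | .sum a _, .vleft v => holes α a v
  | .sum _ b, .vright v => holes α b v
  | .prod a b, .vpair v w => holes α a v ++ holes α b w
  | _, _ => []

/-- Environment shells: per-variable shells. -/
def envshell (Δ : List PTy) (δ : List Val) : List Shell :=
  List.zipWith shell Δ δ

/-- Environment holes: concatenated α-holes across all variables. -/
def envholes (α : ℕ) (Δ : List PTy) (δ : List Val) : List Val :=
  (List.zipWith (holes α) Δ δ).flatten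

/-- The equality-pattern relation on value environments. -/
def EqPat (Δ : List PTy) (δ₁ δ₂ : List Val) : Prop :=
  envshell Δ δ₁ = envshell Δ δ₂ ∧
  ∀ (α : ℕ) (i j : ℕ) (h₁ k₁ h₂ k₂ : Val),
    (envholes α Δ δ₁)[i]? = some h₁ → (envholes α Δ δ₁)[j]? = some k₁ →
    (envholes α Δ δ₂)[i]? = some h₂ → (envholes α Δ δ₂)[j]? = some k₂ →
    (h₁ = k₁ ↔ h₂ = k₂)

/-- Well-typedness of a value environment: δ : σ(Δ). -/
def EnvTy (σ : ℕ → PTy) (Δ : List PTy) (δ : List Val) : Prop :=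
  List.Forall₂ (fun τ v => HasTy v (psubst σ τ)) Δ δ

/-- Value terms, possibly containing variables (de Bruijn style indices into Δ). -/
inductive Term : Type
  | sole : Term
  | tleft : Term → Term
  | tright : Term → Term
  | tpair : Term → Term → Term
  | var : ℕ → Term
deriving DecidableEq

/-- Denotation of a term under a value environment. -/
def denT : Term → List Val → Val
  | .sole, _ => .sole
  | .tleft t, δ => .vleft (denT t δ)
  | .tright t, δ => .vright (denT t δ)
  | .tpair s t, δ => .vpair (denT s δ) (denT t δ)
  | .var n, δ => δ.getD n .sole

/-- Typing of terms under a type environment. -/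
inductive TmTy : List PTy → Term → PTy → Prop
  | sole {Δ} : TmTy Δ .sole .unit
  | tleft {Δ t a b} : TmTy Δ t a → TmTy Δ (.tleft t) (.sum a b)
  | tright {Δ t a b} : TmTy Δ t b → TmTy Δ (.tright t) (.sum a b)
  | tpair {Δ s t a b} : TmTy Δ s a → TmTy Δ t b → TmTy Δ (.tpair s t) (.prod a b)
  | var {Δ n τ} : Δ[n]? = some τ → TmTy Δ (.var n) τ

/-- Maximum number of occurrences of type variable α in a type. -/
def cnt (α : ℕ) : PTy → ℕ
  | .unit => 0
  | .sum a b => max (cnt α a) (cnt α b)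
  | .prod a b => cnt α a + cnt α b
  | .var n => if n = α then 1 else 0

/-- Maximum number of occurrences of α in a type environment. -/
def cntEnv (α : ℕ) (Δ : List PTy) : ℕ := (Δ.map (cnt α)).sum

/-- Enumeration of the concrete values of a (monomorphic) type. -/
def enum : PTy → List Val
  | .unit => [.sole]
  | .sum a b => (enum a).map .vleft ++ (enum b).map .vright
  | .prod a b => (enum a).flatMap (fun v => (enum b).map (.vpair v))
  | .var _ => []

/-! A value of type `psubst σ τ` is determined by its shell at `τ` together with its list of
`α`-holes for every type variable `α`. The shell of a denotation `⟦v⟧ δ` depends only on the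
envshell of `δ`, and its `α`-holes are read off the `α`-holes of `δ` at positions fixed by the
shells. If `δ₁` and `δ₂` have the same equality pattern, each of their `α`-hole lists is the image
of the other under some map, since equal entries in one list sit at positions where the other list
has equal entries too; applying such a map transports equality of holes of `⟦v₁⟧` and `⟦v₂⟧` from
one environment to the other. -/

namespace List

variable {α : Type*}

theorem exists_eq_map_of_getElem?_eq_imp {l₁ l₂ : List α} (hlen : l₁.length = l₂.length)
    (h : ∀ (i j : ℕ) (a b c d : α), l₁[i]? = some a → l₁[j]? = some b →
      l₂[i]? = some c → l₂[j]? = some d → a = b → c = d) :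
    ∃ g : α → α, l₂ = l₁.map g := by
  classical
  refine ⟨fun x => l₂.getD (l₁.idxOf x) x, ext_getElem (by simp [hlen]) fun i hi₂ hi => ?_⟩
  have hi₁ : i < l₁.length := by simpa using hi
  have hidx : l₁.idxOf l₁[i] < l₁.length := idxOf_lt_length_of_mem (getElem_mem hi₁)
  rw [getElem_map, getD_eq_getElem _ _ (hlen ▸ hidx)]
  exact h _ _ _ _ _ _ (getElem?_eq_getElem hi₁) (getElem?_eq_getElem hidx)
    (getElem?_eq_getElem hi₂) (getElem?_eq_getElem (hlen ▸ hidx)) (getElem_idxOf hidx).symm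

theorem eq_of_flatten_eq_of_map_length_eq {β : Type*} :
    ∀ {L L' : List (List β)}, L.flatten = L'.flatten → L.map length = L'.map length → L = L'
  | [], [], _, _ => rfl
  | a :: L, a' :: L', hf, hl => by
    simp only [flatten_cons, map_cons, cons.injEq] at hf hl
    obtain ⟨rfl, hrest⟩ := append_inj hf hl.1
    rw [eq_of_flatten_eq_of_map_length_eq hrest hl.2]

theorem getElem?_zipWith_of_length_eq {β γ : Type*} {f : α → β → γ} {l : List α} {l' : List β}
    (hl : l.length = l'.length) {n : ℕ} {a : α} (ha : l[n]? = some a) (d : β) :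
    (zipWith f l l')[n]? = some (f a (l'.getD n d)) := by
  have hn : n < l'.length := hl ▸ (getElem?_eq_some_iff.mp ha).1
  simp [getElem?_zipWith, ha, getElem?_eq_getElem hn]

end List

def Shell.holeCount (α : ℕ) : Shell → ℕ
  | .sole => 0
  | .sleft s | .sright s => s.holeCount α
  | .spair s t => s.holeCount α + t.holeCount α
  | .hole n => if n = α then 1 else 0

theorem length_holes (α : ℕ) : ∀ (τ : PTy) (u : Val),
    (holes α τ u).length = (shell τ u).holeCount α
  | .var n, _ => by by_cases h : n = α <;> simp [holes, shell, Shell.holeCount, h]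
  | .sum a _, .vleft v => length_holes α a v
  | .sum _ b, .vright v => length_holes α b v
  | .prod a b, .vpair v w => by
    simp [holes, shell, Shell.holeCount, length_holes α a v, length_holes α b w]
  | .unit, _ | .sum _ _, .sole | .sum _ _, .vpair _ _ | .prod _ _, .sole | .prod _ _, .vleft _
  | .prod _ _, .vright _ => rfl

theorem eq_iff_shell_eq_and_holes_eq {σ : ℕ → PTy} :
    ∀ {τ : PTy} {u₁ u₂ : Val}, HasTy u₁ (psubst σ τ) → HasTy u₂ (psubst σ τ) →
      (u₁ = u₂ ↔ shell τ u₁ = shell τ u₂ ∧ ∀ α, holes α τ u₁ = holes α τ u₂)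
  | .unit, _, _, .sole, .sole => by simp
  | .var n, _, _, _, _ =>
    ⟨fun h => h ▸ ⟨rfl, fun _ => rfl⟩, fun ⟨_, h⟩ => by simpa [holes] using h n⟩
  | .sum a _, _, _, .vleft h₁, .vleft h₂ => by
    simpa [shell, holes] using eq_iff_shell_eq_and_holes_eq h₁ h₂
  | .sum _ b, _, _, .vright h₁, .vright h₂ => by
    simpa [shell, holes] using eq_iff_shell_eq_and_holes_eq h₁ h₂
  | .sum _ _, _, _, .vleft _, .vright _ | .sum _ _, _, _, .vright _, .vleft _ => by simp [shell]
  | .prod a b, _, _, .vpair h₁ k₁, .vpair h₂ k₂ => by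
    simp only [shell, holes, Val.vpair.injEq, Shell.spair.injEq,
      eq_iff_shell_eq_and_holes_eq h₁ h₂, eq_iff_shell_eq_and_holes_eq k₁ k₂]
    refine ⟨fun ⟨⟨hsa, hha⟩, hsb, hhb⟩ => ⟨⟨hsa, hsb⟩, fun α => by rw [hha, hhb]⟩,
      fun ⟨⟨hsa, hsb⟩, hh⟩ => ?_⟩
    have hsplit := fun α => List.append_inj (hh α) (by simp only [length_holes, hsa])
    exact ⟨⟨hsa, fun α => (hsplit α).1⟩, hsb, fun α => (hsplit α).2⟩

theorem hasTy_denT {σ : ℕ → PTy} {Δ : List PTy} {δ : List Val} (ht : EnvTy σ Δ δ)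
    {v : Term} {τ : PTy} (hv : TmTy Δ v τ) : HasTy (denT v δ) (psubst σ τ) := by
  induction hv with
  | sole => exact .sole
  | tleft _ ih => exact .vleft ih
  | tright _ ih => exact .vright ih
  | tpair _ _ ih₁ ih₂ => exact .vpair ih₁ ih₂
  | @var n _ h =>
    obtain ⟨hn, rfl⟩ := List.getElem?_eq_some_iff.mp h
    have hn' : n < δ.length := ht.length_eq ▸ hn
    rw [denT, List.getD_eq_getElem _ _ hn']
    simpa using ht.get hn hn'

section Denotation

variable {Δ : List PTy} {δ₁ δ₂ : List Val}

theorem shell_denT_eq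
    (h : ∀ n τ, Δ[n]? = some τ → shell τ (δ₁.getD n .sole) = shell τ (δ₂.getD n .sole))
    {v : Term} {τ : PTy} (hv : TmTy Δ v τ) : shell τ (denT v δ₁) = shell τ (denT v δ₂) := by
  induction hv with
  | sole => rfl
  | tleft _ ih | tright _ ih => simp [denT, shell, ih]
  | tpair _ _ ih₁ ih₂ => simp [denT, shell, ih₁, ih₂]
  | var hn => exact h _ _ hn

theorem holes_denT_eq_map {α : ℕ} {g : Val → Val}
    (h : ∀ n τ, Δ[n]? = some τ →
      holes α τ (δ₂.getD n .sole) = (holes α τ (δ₁.getD n .sole)).map g)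
    {v : Term} {τ : PTy} (hv : TmTy Δ v τ) :
    holes α τ (denT v δ₂) = (holes α τ (denT v δ₁)).map g := by
  induction hv with
  | sole => rfl
  | tleft _ ih | tright _ ih => simp [denT, holes, ih]
  | tpair _ _ ih₁ ih₂ => simp [denT, holes, ih₁, ih₂]
  | var hn => exact h _ _ hn

theorem shell_getD_eq_of_envshell_eq (hl₁ : Δ.length = δ₁.length)
    (hl₂ : Δ.length = δ₂.length) (hs : envshell Δ δ₁ = envshell Δ δ₂) {n : ℕ} {τ : PTy}
    (hn : Δ[n]? = some τ) :
    shell τ (δ₁.getD n .sole) = shell τ (δ₂.getD n .sole) := by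
  have h := congrArg (·[n]?) hs
  simpa only [envshell, List.getElem?_zipWith_of_length_eq hl₁ hn .sole,
    List.getElem?_zipWith_of_length_eq hl₂ hn .sole, Option.some.injEq] using h

theorem exists_holes_getD_eq_map (hl₁ : Δ.length = δ₁.length)
    (hl₂ : Δ.length = δ₂.length) (hs : envshell Δ δ₁ = envshell Δ δ₂) {α : ℕ}
    (hq : ∀ (i j : ℕ) (a b c d : Val), (envholes α Δ δ₁)[i]? = some a →
      (envholes α Δ δ₁)[j]? = some b → (envholes α Δ δ₂)[i]? = some c →
      (envholes α Δ δ₂)[j]? = some d → a = b → c = d) :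
    ∃ g : Val → Val, ∀ n τ, Δ[n]? = some τ →
      holes α τ (δ₂.getD n .sole) = (holes α τ (δ₁.getD n .sole)).map g := by
  have hchunks : (List.zipWith (holes α) Δ δ₁).map List.length =
      (List.zipWith (holes α) Δ δ₂).map List.length := by
    have hcount : ∀ δ, (List.zipWith (holes α) Δ δ).map List.length =
        (envshell Δ δ).map (Shell.holeCount α) := by
      simp [envshell, List.map_zipWith, length_holes]
    rw [hcount, hcount, hs]
  obtain ⟨g, hg⟩ := List.exists_eq_map_of_getElem?_eq_imp
    (by simp only [envholes, List.length_flatten, hchunks]) hq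
  -- the chunk lengths agree, so the renaming of the flattened hole lists splits variable-wise
  have hL : List.zipWith (holes α) Δ δ₂ = (List.zipWith (holes α) Δ δ₁).map (List.map g) :=
    List.eq_of_flatten_eq_of_map_length_eq (by rw [← List.map_flatten]; exact hg)
      (by rw [List.map_map, ← hchunks]; simp [Function.comp_def])
  refine ⟨g, fun n τ hn => ?_⟩
  have h := congrArg (·[n]?) hL
  simpa only [List.getElem?_map, List.getElem?_zipWith_of_length_eq hl₁ hn .sole,
    List.getElem?_zipWith_of_length_eq hl₂ hn .sole, Option.map_some, Option.some.injEq] using h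

end Denotation

/-- Equality patterns preserve value equality: under equality-pattern-equivalent
environments, denotations of two terms of a common type agree on equality. -/
theorem stmt_8 (σ₁ σ₂ : ℕ → PTy) (Δ : List PTy) (δ₁ δ₂ : List Val)
    (ht₁ : EnvTy σ₁ Δ δ₁) (ht₂ : EnvTy σ₂ Δ δ₂)
    (hp : EqPat Δ δ₁ δ₂)
    (τ : PTy) (v₁ v₂ : Term) (hv₁ : TmTy Δ v₁ τ) (hv₂ : TmTy Δ v₂ τ) :
    denT v₁ δ₁ = denT v₂ δ₁ ↔ denT v₁ δ₂ = denT v₂ δ₂ := by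
  obtain ⟨hs, hq⟩ := hp
  have hl₁ := ht₁.length_eq
  have hl₂ := ht₂.length_eq
  have hshell : ∀ n τ', Δ[n]? = some τ' →
      shell τ' (δ₁.getD n .sole) = shell τ' (δ₂.getD n .sole) :=
    fun _ _ => shell_getD_eq_of_envshell_eq hl₁ hl₂ hs
  rw [eq_iff_shell_eq_and_holes_eq (hasTy_denT ht₁ hv₁) (hasTy_denT ht₁ hv₂),
    eq_iff_shell_eq_and_holes_eq (hasTy_denT ht₂ hv₁) (hasTy_denT ht₂ hv₂),
    shell_denT_eq hshell hv₁, shell_denT_eq hshell hv₂]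
  refine and_congr_right' (forall_congr' fun α => ⟨fun h => ?_, fun h => ?_⟩)
  · obtain ⟨g, hg⟩ := exists_holes_getD_eq_map hl₁ hl₂ hs
      fun i j a b c d ha hb hc hd => (hq α i j a b c d ha hb hc hd).mp
    rw [holes_denT_eq_map hg hv₁, holes_denT_eq_map hg hv₂, h]
  · obtain ⟨g, hg⟩ := exists_holes_getD_eq_map hl₂ hl₁ hs.symm
      fun i j a b c d ha hb hc hd => (hq α i j c d a b hc hd ha hb).mpr
    rw [holes_denT_eq_map hg hv₁, holes_denT_eq_map hg hv₂, h]
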